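/- arXiv:1402.1674 — 6 statements merged into one kernel-verified Lean document; each statement's English description precedes it below -/
import Mathlib

section
/- Let N ≥ 1 be a number of secondary users (SUs), let θ : Fin N → ℝ be antitone (SUs sorted in descending order of type) with θ i > 0 for all i, and let B_R ≥ 0 (reserved bandwidth) and r > 0 (registration fee) be real numbers. Let k* be the largest k ∈ {0, 1, …, N} such that k = 0 or B_R·θ(k−1) > k·r (this maximum exists since the candidate set contains 0 and is finite). Then the strategy profile in which exactly the SUs with indices 0, …, k*−1 register is a Nash equilibrium of the complete-information database registration game: (i) for every index i with i < k* one has B_R·θ(i) > k*·r, so each registered SU's utility B_R·θ(i)/k* − r is positive and in particular at least the utility 0 it would get from not registering; and (ii) for every index j with k* ≤ j < N one has B_R·θ(j) ≤ (k*+1)·r, so an unregistered SU deviating to register would obtain utility B_R·θ(j)/(k*+1) − r ≤ 0, no more than its current utility 0. -/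
/-! Sorting the SUs by type makes the profitability test monotone in the index: if the
`k`-th strongest SU still profits from sharing `B_R` with `k - 1` stronger ones, so does every
stronger SU. Hence the first `k*` SUs all profit, and maximality of `k*` says the `(k*+1)`-st
SU — the strongest unregistered one — cannot profit from joining, so neither can any weaker one. -/

section ThresholdCount

variable {N : ℕ} {v : Fin N → ℝ} {r : ℝ} {k : ℕ}

theorem mul_lt_of_lt_threshold_count (hv : Antitone v)
    (hk : k = 0 ∨ ∃ h : k - 1 < N, v ⟨k - 1, h⟩ > (k : ℝ) * r) {i : Fin N} (hi : (i : ℕ) < k) :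
    (k : ℝ) * r < v i := by
  obtain ⟨h, hlast⟩ := hk.resolve_left (by omega)
  exact hlast.trans_le (hv (Fin.mk_le_mk.2 (by omega) : i ≤ ⟨k - 1, h⟩))

theorem le_mul_of_threshold_count_le
    (hv : Antitone v)
    (hmax : ∀ m, m ≤ N → (m = 0 ∨ ∃ h : m - 1 < N, v ⟨m - 1, h⟩ > (m : ℝ) * r) → m ≤ k)
    {j : Fin N} (hj : k ≤ (j : ℕ)) :
    v j ≤ ((k : ℝ) + 1) * r := by
  have hkN : k < N := hj.trans_lt j.isLt
  have hnext : v ⟨k, hkN⟩ ≤ ((k : ℝ) + 1) * r := by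
    by_contra! hgt
    have := hmax (k + 1) hkN (Or.inr ⟨by omega, by push_cast; exact hgt⟩)
    omega
  exact (hv (Fin.mk_le_mk.2 hj : (⟨k, hkN⟩ : Fin N) ≤ j)).trans hnext

end ThresholdCount

theorem div_sub_pos_of_mul_lt {x c r : ℝ} (hc : 0 < c) (h : c * r < x) : 0 < x / c - r :=
  sub_pos.2 ((lt_div_iff₀ hc).2 (by linarith))

theorem div_sub_nonpos_of_le_mul {x c r : ℝ} (hc : 0 < c) (h : x ≤ c * r) : x / c - r ≤ 0 :=
  sub_nonpos.2 ((div_le_iff₀ hc).2 (by linarith))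

theorem stmt0_general (N : ℕ) (θ : Fin N → ℝ) (hθanti : Antitone θ)
    (B_R r : ℝ) (hB : 0 ≤ B_R)
    (kstar : ℕ)
    (hkmem : kstar = 0 ∨ ∃ h : kstar - 1 < N, B_R * θ ⟨kstar - 1, h⟩ > (kstar : ℝ) * r)
    (hkmax : ∀ k, k ≤ N → (k = 0 ∨ ∃ h : k - 1 < N, B_R * θ ⟨k - 1, h⟩ > (k : ℝ) * r) →
      k ≤ kstar) :
    (∀ i : Fin N, (i : ℕ) < kstar →
      B_R * θ i > (kstar : ℝ) * r ∧
      0 < B_R * θ i / (kstar : ℝ) - r ∧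
      B_R * θ i / (kstar : ℝ) - r ≥ 0) ∧
    (∀ j : Fin N, kstar ≤ (j : ℕ) →
      B_R * θ j ≤ ((kstar : ℝ) + 1) * r ∧
      B_R * θ j / ((kstar : ℝ) + 1) - r ≤ 0) := by
  have hv : Antitone fun i => B_R * θ i := hθanti.const_mul hB
  refine ⟨fun i hi => ?_, fun j hj => ?_⟩
  · have hprofit := mul_lt_of_lt_threshold_count hv hkmem hi
    have hk : (0 : ℝ) < kstar := by exact_mod_cast i.val.zero_le.trans_lt hi
    have hpayoff := div_sub_pos_of_mul_lt hk hprofit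
    exact ⟨hprofit, hpayoff, hpayoff.le⟩
  · have hloss := le_mul_of_threshold_count_le hv hkmax hj
    exact ⟨hloss, div_sub_nonpos_of_le_mul (by positivity) hloss⟩

/-- In the complete-information database registration game with `N ≥ 1`
SUs of positive types `θ` sorted in descending order (antitone), reserved bandwidth
`B_R ≥ 0` and registration fee `r > 0`, let `kstar` be the largest
`k ∈ {0, 1, …, N}` such that `k = 0` or `B_R·θ(k-1) > k·r`.  Then the profile in which
exactly the SUs `0, …, kstar - 1` register is a Nash equilibrium:
(i) every registered SU `i < kstar` has `B_R·θ(i) > kstar·r`, so its utility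
`B_R·θ(i)/kstar − r` is positive (in particular at least the utility `0` of not registering);
(ii) every unregistered SU `j ≥ kstar` has `B_R·θ(j) ≤ (kstar+1)·r`, so the deviation
utility `B_R·θ(j)/(kstar+1) − r` is non-positive, no more than its current utility `0`. -/
theorem stmt0 (N : ℕ) (hN : 1 ≤ N) (θ : Fin N → ℝ) (hθanti : Antitone θ)
    (hθpos : ∀ i, 0 < θ i) (B_R r : ℝ) (hB : 0 ≤ B_R) (hr : 0 < r)
    (kstar : ℕ) (hkle : kstar ≤ N)
    (hkmem : kstar = 0 ∨ ∃ h : kstar - 1 < N, B_R * θ ⟨kstar - 1, h⟩ > (kstar : ℝ) * r)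
    (hkmax : ∀ k, k ≤ N → (k = 0 ∨ ∃ h : k - 1 < N, B_R * θ ⟨k - 1, h⟩ > (k : ℝ) * r) →
      k ≤ kstar) :
    (∀ i : Fin N, (i : ℕ) < kstar →
      B_R * θ i > (kstar : ℝ) * r ∧
      0 < B_R * θ i / (kstar : ℝ) - r ∧
      B_R * θ i / (kstar : ℝ) - r ≥ 0) ∧
    (∀ j : Fin N, kstar ≤ (j : ℕ) →
      B_R * θ j ≤ ((kstar : ℝ) + 1) * r ∧
      B_R * θ j / ((kstar : ℝ) + 1) - r ≤ 0) :=
  stmt0_general N θ hθanti B_R r hB kstar hkmem hkmax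
end

section
/- For every N ≥ 1, every θ : Fin N → ℝ with θ i > 0 for all i, every B_R ≥ 0 and every r > 0, the complete-information database registration game possesses a pure-strategy Nash equilibrium: there exists a : Fin N → Bool such that, writing μ₀ = #{i : a i = true}, every i with a i = true satisfies B_R·θ(i)/μ₀ − r ≥ 0 and every i with a i = false satisfies B_R·θ(i)/(μ₀+1) − r ≤ 0. (No ordering assumption on θ is required.) -/
/-!
Let `S m` be the set of SUs whose gross value `B_R θ(i)` is at least `m r`; it shrinks as `m`
grows. For the largest `k` with `k ≤ #(S k)` we get `#(S (k+1)) ≤ k ≤ #(S k)`, so some set `A`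
of exactly `k` SUs satisfies `S (k+1) ⊆ A ⊆ S k`. Letting exactly `A` register is an
equilibrium: members of `S k` can afford a share `1/k`, non-members of `S (k+1)` cannot afford
a share `1/(k+1)`.
-/

open Finset

theorem Finset.exists_subsuperset_card_of_antitone {α : Type*} [DecidableEq α]
    {S : ℕ → Finset α} (hS : Antitone S) : ∃ A : Finset α, S (#A + 1) ⊆ A ∧ A ⊆ S #A := by
  let P : ℕ → Prop := fun m => m ≤ #(S m)
  set k := Nat.findGreatest P #(S 0)
  have hk : k ≤ #(S k) := Nat.findGreatest_spec (P := P) (Nat.zero_le _) (Nat.zero_le _)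
  have hk_succ : #(S (k + 1)) ≤ k := by
    rcases (Nat.findGreatest_le (P := P) #(S 0)).eq_or_lt with hmax | hlt
    · exact (card_le_card (hS (Nat.zero_le _))).trans hmax.ge
    · have hnot : ¬ P (k + 1) := Nat.findGreatest_is_greatest (Nat.lt_succ_self k) hlt
      exact Nat.lt_succ_iff.mp (not_le.mp hnot)
  obtain ⟨A, hA_sup, hA_sub, hA⟩ := exists_subsuperset_card_eq (hS k.le_succ) hk_succ hk
  exact ⟨A, hA ▸ hA_sup, hA ▸ hA_sub⟩

theorem antitone_filter_natCast_mul_le {ι : Type*} [Fintype ι] {r : ℝ} (hr : 0 ≤ r) (v : ι → ℝ) :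
    Antitone fun m : ℕ => univ.filter fun i => (m : ℝ) * r ≤ v i := by
  intro m n hmn i
  simp only [mem_filter, mem_univ, true_and]
  exact le_trans (by gcongr)

theorem stmt1_general (N : ℕ) (θ : Fin N → ℝ)
    (B_R r : ℝ) (hr : 0 < r) :
    ∃ a : Fin N → Bool,
      (∀ i : Fin N, a i = true →
        B_R * θ i / ((Finset.univ.filter fun j => a j = true).card : ℝ) - r ≥ 0) ∧
      (∀ i : Fin N, a i = false →
        B_R * θ i / (((Finset.univ.filter fun j => a j = true).card : ℝ) + 1) - r ≤ 0) := by
  obtain ⟨A, hA_sup, hA_sub⟩ :=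
    exists_subsuperset_card_of_antitone (antitone_filter_natCast_mul_le hr.le fun i => B_R * θ i)
  have hfilter : (univ.filter fun j => decide (j ∈ A) = true) = A := by simp
  refine ⟨fun i => decide (i ∈ A), fun i hi => ?_, fun i hi => ?_⟩ <;> rw [hfilter]
  · replace hi : i ∈ A := by simpa using hi
    have hvalue : #A * r ≤ B_R * θ i := by simpa using hA_sub hi
    have hA_pos : (0 : ℝ) < #A := by exact_mod_cast card_pos.mpr ⟨i, hi⟩
    rw [ge_iff_le, sub_nonneg, le_div_iff₀ hA_pos]
    linarith
  · replace hi : i ∉ A := by simpa using hi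
    have hvalue : B_R * θ i < (#A + 1) * r := by
      simpa using mt (@hA_sup i) hi
    rw [sub_nonpos, div_le_iff₀ (by positivity)]
    linarith

/-- For every `N ≥ 1`, every family of positive types `θ : Fin N → ℝ`
(no ordering assumption), every reserved bandwidth `B_R ≥ 0` and registration fee `r > 0`,
the complete-information database registration game has a pure-strategy Nash equilibrium:
there is a profile `a : Fin N → Bool` (true = register) such that, with
`μ₀ = #{i : a i = true}`, every registered SU has `B_R·θ(i)/μ₀ − r ≥ 0` and every
unregistered SU has `B_R·θ(i)/(μ₀+1) − r ≤ 0`. -/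
theorem stmt1 (N : ℕ) (hN : 1 ≤ N) (θ : Fin N → ℝ) (hθpos : ∀ i, 0 < θ i)
    (B_R r : ℝ) (hB : 0 ≤ B_R) (hr : 0 < r) :
    ∃ a : Fin N → Bool,
      (∀ i : Fin N, a i = true →
        B_R * θ i / ((Finset.univ.filter fun j => a j = true).card : ℝ) - r ≥ 0) ∧
      (∀ i : Fin N, a i = false →
        B_R * θ i / (((Finset.univ.filter fun j => a j = true).card : ℝ) + 1) - r ≤ 0) :=
  stmt1_general N θ B_R r hr
end

section
/- Let N ∈ ℕ and for each player i ∈ Fin N let f i : ℕ → ℝ and g i : ℕ → ℝ be antitone (non-increasing) functions. Then the two-strategy crowding game with player-specific payoffs possesses a pure-strategy Nash equilibrium: there exists a profile a : Fin N → Bool such that, writing μ₀ = #{i : a i = false} and μ₁ = #{i : a i = true}, for every player i: if a i = false then f i μ₀ ≥ g i (μ₁ + 1), and if a i = true then g i μ₁ ≥ f i (μ₀ + 1). -/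
/-!
Let `willing k` be the players who weakly prefer `true` when `k` players (themselves included)
play it, and `eager k` the players who, playing `false` while `k` others play `true`, strictly
prefer to join them. A set `T` of `true`-players is an equilibrium exactly when
`eager #T ⊆ T ⊆ willing #T`. Monotonicity of the payoffs gives `eager k ⊆ willing k` and
`eager k ⊆ willing (k + 1)`, so for the largest `k` with `k ≤ #(willing k)` we also have
`#(eager k) ≤ k`, and any `T` of size `k` squeezed between the two sets is an equilibrium.
-/

open Finset

/-- A discrete intermediate-value argument: the largest `k ≤ n` with `k ≤ #(W k)` works. -/
theorem Finset.exists_subset_subset_card_eq {ι : Type*} (n : ℕ) (S W : ℕ → Finset ι)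
    (hSW : ∀ k, S k ⊆ W k) (hSW_succ : ∀ k < n, S k ⊆ W (k + 1)) (hSn : #(S n) ≤ n) :
    ∃ k, ∃ T, S k ⊆ T ∧ T ⊆ W k ∧ #T = k := by
  let P k := k ≤ #(W k)
  set K := Nat.findGreatest P n
  have hK : K ≤ #(W K) := Nat.findGreatest_spec (P := P) (Nat.zero_le n) (Nat.zero_le _)
  have hKn : K ≤ n := Nat.findGreatest_le n
  have hSK : #(S K) ≤ K := by
    rcases hKn.eq_or_lt with hKn | hKn
    · rwa [hKn]
    · have hW : ¬ K + 1 ≤ #(W (K + 1)) :=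
        Nat.findGreatest_is_greatest (P := P) (Nat.lt_succ_self K) hKn
      have := card_le_card (hSW_succ K hKn)
      omega
  obtain ⟨T, hST, hTW, hT⟩ := exists_subsuperset_card_eq (hSW K) hSK hK
  exact ⟨K, T, hST, hTW, hT⟩

namespace CrowdingGame

variable {ι : Type*} [Fintype ι] (f g : ι → ℕ → ℝ)

noncomputable def willing (k : ℕ) : Finset ι :=
  {i | f i (Fintype.card ι - k + 1) ≤ g i k}

noncomputable def eager (k : ℕ) : Finset ι :=
  {i | f i (Fintype.card ι - k) < g i (k + 1)}

variable {f g}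

theorem eager_subset_willing (hf : ∀ i, Antitone (f i)) (hg : ∀ i, Antitone (g i)) (k : ℕ) :
    eager f g k ⊆ willing f g k := by
  intro i hi
  simp only [eager, willing, mem_filter, mem_univ, true_and] at hi ⊢
  calc f i (Fintype.card ι - k + 1) ≤ f i (Fintype.card ι - k) := hf i (Nat.le_succ _)
    _ ≤ g i (k + 1) := hi.le
    _ ≤ g i k := hg i (Nat.le_succ k)

theorem eager_subset_willing_succ {k : ℕ} (hk : k < Fintype.card ι) :
    eager f g k ⊆ willing f g (k + 1) := by
  intro i hi
  simp only [eager, willing, mem_filter, mem_univ, true_and] at hi ⊢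
  rw [show Fintype.card ι - (k + 1) + 1 = Fintype.card ι - k by omega]
  exact hi.le

theorem exists_eager_subset_subset_willing (hf : ∀ i, Antitone (f i))
    (hg : ∀ i, Antitone (g i)) :
    ∃ T : Finset ι, eager f g #T ⊆ T ∧ T ⊆ willing f g #T := by
  obtain ⟨k, T, hST, hTW, rfl⟩ := exists_subset_subset_card_eq (Fintype.card ι)
    (eager f g) (willing f g) (eager_subset_willing hf hg) (fun _ ↦ eager_subset_willing_succ)
    (card_le_univ _)
  exact ⟨T, hST, hTW⟩

end CrowdingGame

open CrowdingGame

/-- Every two-strategy crowding game with player-specific antitone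
payoff functions `f i` (for strategy `false`) and `g i` (for strategy `true`) possesses a
pure-strategy Nash equilibrium: there is a profile `a : Fin N → Bool` such that, writing
`μ₀ = #{j : a j = false}` and `μ₁ = #{j : a j = true}`, every player playing `false`
satisfies `f i μ₀ ≥ g i (μ₁ + 1)` and every player playing `true` satisfies
`g i μ₁ ≥ f i (μ₀ + 1)`. -/
theorem stmt2 (N : ℕ) (f g : Fin N → ℕ → ℝ)
    (hf : ∀ i, Antitone (f i)) (hg : ∀ i, Antitone (g i)) :
    ∃ a : Fin N → Bool,
      ∀ i : Fin N,
        (a i = false →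
          f i (Finset.univ.filter fun j => a j = false).card ≥
            g i ((Finset.univ.filter fun j => a j = true).card + 1)) ∧
        (a i = true →
          g i (Finset.univ.filter fun j => a j = true).card ≥
            f i ((Finset.univ.filter fun j => a j = false).card + 1)) := by
  obtain ⟨T, hET, hTW⟩ := exists_eager_subset_subset_willing hf hg
  refine ⟨fun i ↦ decide (i ∈ T), fun i ↦ ?_⟩
  have hTrue : ({j | decide (j ∈ T) = true} : Finset (Fin N)) = T := by ext; simp
  have hFalse : #({j | decide (j ∈ T) = false} : Finset (Fin N)) = N - #T := by
    rw [show ({j | decide (j ∈ T) = false} : Finset (Fin N)) = Tᶜ by ext; simp, card_compl,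
      Fintype.card_fin]
  rw [hTrue, hFalse]
  constructor
  · intro hi
    have hiE : i ∉ eager f g #T := fun h ↦ by simp [hET h] at hi
    simpa [eager] using hiE
  · intro hi
    simpa [willing] using hTW (of_decide_eq_true hi)
end

section
/- Let N ∈ ℕ and for each player i ∈ Fin N let f i : ℕ → ℝ and g i : ℕ → ℝ be antitone (non-increasing) functions. Then for every initial profile a⁰ : Fin N → Bool there exist L ≤ N·(N+1) and a sequence of profiles a⁰, a¹, …, a^L : Fin N → Bool such that: (i) for each step ℓ < L, the profiles a^ℓ and a^{ℓ+1} differ in the strategy of exactly one player, and that player's payoff in a^{ℓ+1} (evaluated with the strategy counts of a^{ℓ+1}) is strictly greater than its payoff in a^ℓ (evaluated with the strategy counts of a^ℓ); and (ii) the final profile a^L is a pure-strategy Nash equilibrium. -/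
/-- Number of players choosing strategy `false` in profile `a`. -/
def mu0 {N : ℕ} (a : Fin N → Bool) : ℕ := (Finset.univ.filter fun j => a j = false).card

/-- Number of players choosing strategy `true` in profile `a`. -/
def mu1 {N : ℕ} (a : Fin N → Bool) : ℕ := (Finset.univ.filter fun j => a j = true).card

/-- Payoff of player `i` in profile `a` of the two-strategy crowding game with
player-specific payoff functions `f i` (strategy `false`) and `g i` (strategy `true`). -/
noncomputable def payoff {N : ℕ} (f g : Fin N → ℕ → ℝ) (i : Fin N) (a : Fin N → Bool) : ℝ :=
  if a i = true then g i (mu1 a) else f i (mu0 a)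

/-- Pure-strategy Nash equilibrium of the two-strategy crowding game: no player can
strictly improve by unilaterally switching (the deviator's payoff is evaluated with the
count of the other strategy increased by one). -/
def isNE {N : ℕ} (f g : Fin N → ℕ → ℝ) (a : Fin N → Bool) : Prop :=
  ∀ i : Fin N,
    (a i = false → g i (mu1 a + 1) ≤ f i (mu0 a)) ∧
    (a i = true → f i (mu0 a + 1) ≤ g i (mu1 a))


/-!
Call a profile *leave-stable* if no player on `true` gains by switching to `false`. From a
leave-stable profile, let a player who gains by joining `true` switch; if this makes some player
on `true` want to leave, let that one switch back. By monotonicity of the payoffs the result is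
again leave-stable, with the same or a larger count on `true`, and the set of players on `false`
who gain by joining has lost its chosen member and gained no one. So at most `2N` moves from a
leave-stable profile reach an equilibrium. A profile that is not leave-stable becomes
leave-stable after at most `μ₁` departures, and each player who has just left does not want to
rejoin, which keeps the total within `3N - 2 ≤ N (N + 1)`.
-/

section CrowdingGame

open Function

variable {N : ℕ}

lemma mu0_add_mu1 (a : Fin N → Bool) : mu0 a + mu1 a = N := by
  simpa [mu0, mu1] using Finset.card_filter_add_card_filter_not (s := Finset.univ) (a · = false)

lemma mu1_le (a : Fin N → Bool) : mu1 a ≤ N := by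
  have := mu0_add_mu1 a
  omega

lemma mu1_pos {a : Fin N → Bool} {i : Fin N} (h : a i = true) : 0 < mu1 a :=
  Finset.card_pos.mpr ⟨i, by simp [h]⟩

lemma mu1_update_true {a : Fin N → Bool} {i : Fin N} (h : a i = false) :
    mu1 (update a i true) = mu1 a + 1 := by
  have hset : (Finset.univ.filter fun j => update a i true j = true) =
      insert i (Finset.univ.filter fun j => a j = true) := by
    ext j
    by_cases hj : j = i <;> simp [hj]
  rw [mu1, hset, Finset.card_insert_of_notMem (by simp [h]), mu1]

lemma mu1_update_false {a : Fin N → Bool} {i : Fin N} (h : a i = true) :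
    mu1 (update a i false) + 1 = mu1 a := by
  have key := mu1_update_true (a := update a i false) (i := i) (update_self i false a)
  rw [update_idem, ← h, update_eq_self] at key
  exact key.symm

variable (f g : Fin N → ℕ → ℝ)

/- In both predicates `l` is the number of players on `true` counting player `i` itself, so
`N + 1 - l` is the number on `false` once `i` stands there. -/
def GainsByJoining (i : Fin N) (l : ℕ) : Prop := f i (N + 1 - l) < g i l

def GainsByLeaving (i : Fin N) (l : ℕ) : Prop := g i l < f i (N + 1 - l)

variable {f g}

lemma not_gainsByLeaving_of_gainsByJoining {i : Fin N} {l : ℕ}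
    (h : GainsByJoining f g i l) : ¬ GainsByLeaving f g i l :=
  not_lt.mpr h.le

lemma GainsByJoining.anti (hf : ∀ i, Antitone (f i)) (hg : ∀ i, Antitone (g i))
    {i : Fin N} {l l' : ℕ} (hle : l' ≤ l) (h : GainsByJoining f g i l) :
    GainsByJoining f g i l' :=
  (hf i (Nat.sub_le_sub_left hle _)).trans_lt (h.trans_le (hg i hle))

lemma GainsByLeaving.mono (hf : ∀ i, Antitone (f i)) (hg : ∀ i, Antitone (g i))
    {i : Fin N} {l l' : ℕ} (hle : l ≤ l') (h : GainsByLeaving f g i l) :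
    GainsByLeaving f g i l' :=
  (hg i hle).trans_lt (h.trans_le (hf i (Nat.sub_le_sub_left hle _)))

variable (f g)

def IsImprovementStep (a b : Fin N → Bool) : Prop :=
  ∃ i : Fin N, b i ≠ a i ∧ (∀ j : Fin N, j ≠ i → b j = a j) ∧
    payoff f g i a < payoff f g i b

def ReachesNEWithin (a : Fin N → Bool) (k : ℕ) : Prop :=
  ∃ (L : ℕ) (seq : ℕ → Fin N → Bool), L ≤ k ∧ seq 0 = a ∧
    (∀ ℓ < L, IsImprovementStep f g (seq ℓ) (seq (ℓ + 1))) ∧ isNE f g (seq L)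

def LeaveStable (a : Fin N → Bool) : Prop :=
  ∀ i, a i = true → ¬ GainsByLeaving f g i (mu1 a)

open Classical in
noncomputable def joiners (a : Fin N → Bool) : Finset (Fin N) :=
  Finset.univ.filter fun i => a i = false ∧ GainsByJoining f g i (mu1 a + 1)

variable {f g}

lemma mem_joiners {a : Fin N → Bool} {i : Fin N} :
    i ∈ joiners f g a ↔ a i = false ∧ GainsByJoining f g i (mu1 a + 1) := by
  simp [joiners]

namespace ReachesNEWithin

variable {a b : Fin N → Bool} {k : ℕ}

lemma mono {k' : ℕ} (h : ReachesNEWithin f g a k) (hk : k ≤ k') : ReachesNEWithin f g a k' :=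
  let ⟨L, seq, hL, h0, hsteps, hNE⟩ := h
  ⟨L, seq, hL.trans hk, h0, hsteps, hNE⟩

lemma of_isNE (h : isNE f g a) : ReachesNEWithin f g a 0 :=
  ⟨0, fun _ => a, le_rfl, rfl, fun _ h => absurd h (Nat.not_lt_zero _), h⟩

lemma cons (h : ReachesNEWithin f g b k) (hab : IsImprovementStep f g a b) :
    ReachesNEWithin f g a (k + 1) := by
  obtain ⟨L, seq, hL, h0, hsteps, hNE⟩ := h
  refine ⟨L + 1, fun n => Nat.casesOn n a seq, by omega, rfl, ?_, hNE⟩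
  rintro (_ | ℓ) hℓ
  · simpa [h0] using hab
  · exact hsteps ℓ (by omega)

end ReachesNEWithin

lemma isImprovementStep_join {a : Fin N → Bool} {i : Fin N} (h : a i = false)
    (hi : GainsByJoining f g i (mu1 a + 1)) : IsImprovementStep f g a (update a i true) := by
  refine ⟨i, by simp [h], fun j hj => update_of_ne hj _ _, ?_⟩
  have hmu0 : mu0 a = N + 1 - (mu1 a + 1) := by
    have := mu0_add_mu1 a
    omega
  simpa [payoff, h, mu1_update_true h, hmu0, GainsByJoining] using hi

lemma isImprovementStep_leave {a : Fin N → Bool} {i : Fin N} (h : a i = true)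
    (hi : GainsByLeaving f g i (mu1 a)) : IsImprovementStep f g a (update a i false) := by
  refine ⟨i, by simp [h], fun j hj => update_of_ne hj _ _, ?_⟩
  have hmu0 : mu0 (update a i false) = N + 1 - mu1 a := by
    have := mu0_add_mu1 (update a i false)
    have := mu1_update_false h
    have := mu1_le a
    omega
  simpa [payoff, h, hmu0, GainsByLeaving] using hi

lemma isNE_of_leaveStable_of_joiners_eq_empty {a : Fin N → Bool} (hs : LeaveStable f g a)
    (hj : joiners f g a = ∅) : isNE f g a := by
  have hsum := mu0_add_mu1 a
  refine fun i => ⟨fun hi => ?_, fun hi => ?_⟩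
  · have hmu0 : mu0 a = N + 1 - (mu1 a + 1) := by omega
    have : i ∉ joiners f g a := by simp [hj]
    rw [hmu0]
    exact not_lt.mp fun hgain => this (mem_joiners.mpr ⟨hi, hgain⟩)
  · have hmu0 : mu0 a + 1 = N + 1 - mu1 a := by
      have := mu1_pos hi
      omega
    rw [hmu0]
    exact not_lt.mp (hs i hi)

lemma card_joiners_lt (hf : ∀ i, Antitone (f i)) (hg : ∀ i, Antitone (g i))
    {a c : Fin N → Bool} {i : Fin N} (hi : i ∈ joiners f g a) (hci : c i = true)
    (hmu : mu1 a ≤ mu1 c) (hfalse : ∀ p ∈ joiners f g c, a p = false) :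
    (joiners f g c).card < (joiners f g a).card := by
  refine lt_of_le_of_lt (Finset.card_le_card fun p hp => ?_) (Finset.card_erase_lt_of_mem hi)
  obtain ⟨hcp, hgain⟩ := mem_joiners.mp hp
  refine Finset.mem_erase.mpr ⟨fun hpi => ?_, mem_joiners.mpr ⟨hfalse p hp, ?_⟩⟩
  · simp [hpi, hci] at hcp
  · exact hgain.anti hf hg (by omega)

lemma leaveStable_update_update (hf : ∀ i, Antitone (f i)) (hg : ∀ i, Antitone (g i))
    {a : Fin N → Bool} (hs : LeaveStable f g a) {i j : Fin N}
    (hi : GainsByJoining f g i (mu1 a + 1))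
    (hmu : mu1 (update (update a i true) j false) = mu1 a) :
    LeaveStable f g (update (update a i true) j false) := by
  intro p hp
  rw [hmu]
  have hpj : p ≠ j := by
    rintro rfl
    simp at hp
  by_cases hpi : p = i
  · subst hpi
    exact fun hleave => not_gainsByLeaving_of_gainsByJoining hi (hleave.mono hf hg (by omega))
  · simpa [update_of_ne hpj, update_of_ne hpi] using hs p (by simpa [hpj, hpi] using hp)

theorem reachesNEWithin_of_leaveStable (hf : ∀ i, Antitone (f i)) (hg : ∀ i, Antitone (g i))
    {a : Fin N → Bool} (hs : LeaveStable f g a) :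
    ReachesNEWithin f g a (2 * (joiners f g a).card) := by
  induction hn : (joiners f g a).card using Nat.strong_induction_on generalizing a with
  | _ n ih =>
  obtain hempty | ⟨i, hi⟩ := (joiners f g a).eq_empty_or_nonempty
  · exact (ReachesNEWithin.of_isNE (isNE_of_leaveStable_of_joiners_eq_empty hs hempty)).mono
      (Nat.zero_le _)
  obtain ⟨hai, hgain⟩ := mem_joiners.mp hi
  set b := update a i true
  have hmub : mu1 b = mu1 a + 1 := mu1_update_true hai
  have hstep : IsImprovementStep f g a b := isImprovementStep_join hai hgain
  by_cases hsb : LeaveStable f g b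
  · have hlt : (joiners f g b).card < n := hn ▸ card_joiners_lt hf hg hi (update_self i true a)
      (by omega) fun p hp => by
        have hpi : p ≠ i := by rintro rfl; simp [b, mem_joiners] at hp
        simpa [b, hpi] using (mem_joiners.mp hp).1
    exact ((ih _ hlt hsb rfl).cons hstep).mono (by omega)
  obtain ⟨j, hbj, hleave⟩ : ∃ j, b j = true ∧ GainsByLeaving f g j (mu1 b) := by
    simpa [LeaveStable] using hsb
  set c := update b j false
  have hmuc : mu1 c = mu1 a := by
    have : mu1 c + 1 = mu1 b := mu1_update_false hbj
    omega
  have hsc : LeaveStable f g c := leaveStable_update_update hf hg hs hgain hmuc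
  have hji : j ≠ i := by
    rintro rfl
    exact not_gainsByLeaving_of_gainsByJoining hgain (hmub ▸ hleave)
  have hci : c i = true := by simp [c, b, hji.symm]
  have hlt : (joiners f g c).card < n := hn ▸ card_joiners_lt hf hg hi hci hmuc.ge fun p hp => by
    obtain ⟨hcp, hpgain⟩ := mem_joiners.mp hp
    have hpj : p ≠ j := by
      rintro rfl
      exact not_gainsByLeaving_of_gainsByJoining hpgain (by rwa [hmuc, ← hmub])
    have hpi : p ≠ i := by
      rintro rfl
      simp [hci] at hcp
    simpa [c, b, hpj, hpi] using hcp
  exact (((ih _ hlt hsc rfl).cons (isImprovementStep_leave hbj hleave)).cons hstep).mono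
    (by omega)

lemma exists_leave_step {a : Fin N → Bool} (hs : ¬ LeaveStable f g a) :
    ∃ b p, IsImprovementStep f g a b ∧ mu1 b + 1 = mu1 a ∧ p ∉ joiners f g b := by
  obtain ⟨p, hap, hleave⟩ : ∃ p, a p = true ∧ GainsByLeaving f g p (mu1 a) := by
    simpa [LeaveStable] using hs
  have hmu : mu1 (update a p false) + 1 = mu1 a := mu1_update_false hap
  refine ⟨_, p, isImprovementStep_leave hap hleave, hmu, fun hp => ?_⟩
  exact not_gainsByLeaving_of_gainsByJoining (hmu ▸ (mem_joiners.mp hp).2) hleave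

theorem reachesNEWithin_of_not_mem_joiners (hf : ∀ i, Antitone (f i))
    (hg : ∀ i, Antitone (g i)) {a : Fin N → Bool} {j : Fin N} (hj : j ∉ joiners f g a) :
    ReachesNEWithin f g a (mu1 a + 2 * (N - 1)) := by
  induction hn : mu1 a using Nat.strong_induction_on generalizing a j with
  | _ n ih =>
  by_cases hs : LeaveStable f g a
  · have hcard : (joiners f g a).card < N := by
      simpa using Finset.card_lt_univ_of_notMem hj
    exact (reachesNEWithin_of_leaveStable hf hg hs).mono (by omega)
  obtain ⟨b, p, hstep, hmu, hp⟩ := exists_leave_step hs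
  exact ((ih _ (by omega) hp rfl).cons hstep).mono (by omega)

end CrowdingGame

/-- In a two-strategy crowding game with antitone player-specific payoffs,
from every initial profile `a0` there is an improvement path of length `L ≤ N·(N+1)`
terminating in a pure-strategy Nash equilibrium: a sequence of profiles starting at `a0`
such that each consecutive pair differs in the strategy of exactly one player whose payoff
strictly increases, and the final profile is a Nash equilibrium. -/
theorem stmt3 (N : ℕ) (f g : Fin N → ℕ → ℝ)
    (hf : ∀ i, Antitone (f i)) (hg : ∀ i, Antitone (g i)) (a0 : Fin N → Bool) :
    ∃ (L : ℕ) (seq : ℕ → Fin N → Bool),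
      L ≤ N * (N + 1) ∧ seq 0 = a0 ∧
      (∀ ℓ < L, ∃ i : Fin N,
        seq (ℓ + 1) i ≠ seq ℓ i ∧
        (∀ j : Fin N, j ≠ i → seq (ℓ + 1) j = seq ℓ j) ∧
        payoff f g i (seq ℓ) < payoff f g i (seq (ℓ + 1))) ∧
      isNE f g (seq L) := by
  suffices h : ReachesNEWithin f g a0 (N * (N + 1)) from h
  by_cases hs : LeaveStable f g a0
  · have hcard : (joiners f g a0).card ≤ N := by
      simpa using (joiners f g a0).card_le_univ
    exact (reachesNEWithin_of_leaveStable hf hg hs).mono (by nlinarith [Nat.le_mul_self N])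
  obtain ⟨b, p, hstep, hmu, hp⟩ := exists_leave_step hs
  have hN : mu1 a0 ≤ N := mu1_le a0
  exact ((reachesNEWithin_of_not_mem_joiners hf hg hp).cons hstep).mono (by
    obtain ⟨M, rfl⟩ : ∃ M, N = M + 1 := ⟨N - 1, by omega⟩
    rw [Nat.add_sub_cancel]
    nlinarith)
end

section
/- Under the incomplete-information contract construction, the database registration game has a pure-strategy Nash equilibrium. Precisely: let there be N SUs with a type assignment τ : Fin N → {1, …, T}, a reserved bandwidth 0 ≤ B_R ≤ B and a registration fee r > 0, where a registered SU of type t obtains utility B_R·θ_t/μ₀ − r when μ₀ ≥ 1 SUs in total are registered, and an unregistered SU of type t obtains utility W_t(μ₁) when μ₁ ≥ 1 SUs in total are unregistered. Then there exists a profile a : Fin N → Bool (true = register) such that, with μ₀ = #{i : a i = true} and μ₁ = N − μ₀: every registered SU i satisfies B_R·θ_{τ(i)}/μ₀ − r ≥ W_{τ(i)}(μ₁ + 1), and every unregistered SU i satisfies W_{τ(i)}(μ₁) ≥ B_R·θ_{τ(i)}/(μ₀ + 1) − r. -/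
/-! Incomplete-information contract construction.  Types are indexed by `1, …, T`
(with the convention of a null index `0`). -/

/-- `Δ_i = θ_{i+1} − θ_i` for `i < T` and `Δ_T = 0` (also `0` beyond `T`). -/
noncomputable def Delta (T : ℕ) (θ : ℕ → ℝ) (i : ℕ) : ℝ :=
  if i < T then θ (i + 1) - θ i else 0

/-- `g_i(μ₁) = β_i·θ_i·(B−B_R)/M − Δ_i·((B−B_R)/M)·(Σ_{j=i+1}^T β_j) − μ₁·β_i·ε₁`. -/
noncomputable def gCoef (T : ℕ) (θ β : ℕ → ℝ) (B B_R M ε₁ : ℝ) (i μ₁ : ℕ) : ℝ :=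
  β i * θ i * ((B - B_R) / M) -
    Delta T θ i * ((B - B_R) / M) * (∑ j ∈ Finset.Icc (i + 1) T, β j) -
    (μ₁ : ℝ) * β i * ε₁

/-- `i_S(μ₁)`: the largest `i ∈ {1, …, T}` with `g_i(μ₁) ≤ 0`, and `0` if there is none. -/
noncomputable def iS (T : ℕ) (θ β : ℕ → ℝ) (B B_R M ε₁ : ℝ) (μ₁ : ℕ) : ℕ :=
  ((Finset.Icc 1 T).filter fun i => gCoef T θ β B B_R M ε₁ i μ₁ ≤ 0).sup id

/-- Query assignment: `q̂_i(μ₁) = 0` if `i ≤ i_S(μ₁)` and `q̂_i(μ₁) = M` otherwise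
(in particular `q̂_0(μ₁) = 0`). -/
noncomputable def qhat (T : ℕ) (θ β : ℕ → ℝ) (B B_R M ε₁ : ℝ) (i μ₁ : ℕ) : ℝ :=
  if i ≤ iS T θ β B B_R M ε₁ μ₁ then 0 else M

/-- Per-query valuation `v_{μ₁}(q) = ((B−B_R)/(μ₁·M))·q`. -/
noncomputable def vval (B B_R M : ℝ) (μ₁ : ℕ) (q : ℝ) : ℝ :=
  (B - B_R) / ((μ₁ : ℝ) * M) * q

/-- Prices `p̂_k(μ₁) = Σ_{j=1}^{k} θ_j·(v_{μ₁}(q̂_j(μ₁)) − v_{μ₁}(q̂_{j−1}(μ₁)))`. -/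
noncomputable def phat (T : ℕ) (θ β : ℕ → ℝ) (B B_R M ε₁ : ℝ) (k μ₁ : ℕ) : ℝ :=
  ∑ j ∈ Finset.Icc 1 k,
    θ j * (vval B B_R M μ₁ (qhat T θ β B B_R M ε₁ j μ₁) -
      vval B B_R M μ₁ (qhat T θ β B B_R M ε₁ (j - 1) μ₁))

/-- Service-plan utility of a type-`k` SU: `W_k(μ₁) = θ_k·v_{μ₁}(q̂_k(μ₁)) − p̂_k(μ₁)`. -/
noncomputable def W (T : ℕ) (θ β : ℕ → ℝ) (B B_R M ε₁ : ℝ) (k μ₁ : ℕ) : ℝ :=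
  θ k * vval B B_R M μ₁ (qhat T θ β B B_R M ε₁ k μ₁) - phat T θ β B B_R M ε₁ k μ₁

/-! An SU is content in a registered group of size `k` if registering then pays at least as
much as staying out among `N − k + 1` unregistered SUs.  Contentment passes to smaller groups: the
registration share `B_R·θ/μ₀` falls as `μ₀` grows, and `W_t(μ₁)` falls as `μ₁` grows, because the
cut-off `i_S(μ₁)` moves up and the value `(B−B_R)/μ₁` of the full plan moves down.  Take the
largest `k ≤ N` such that at least `k` SUs are content at size `k`.  Fewer than `k + 1` are content
at size `k + 1`, so any `k` SUs that are content at size `k` and include all of those form an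
equilibrium. -/

open Finset

theorem exists_stable_finset {ι : Type*} [Fintype ι] (P : ι → ℕ → Prop)
    (hP : ∀ i k, 1 ≤ k → P i (k + 1) → P i k) :
    ∃ S : Finset ι, (∀ i ∈ S, P i #S) ∧ ∀ i ∉ S, ¬ P i (#S + 1) := by
  classical
  obtain ⟨k, hA, hB⟩ : ∃ k, #(univ.filter fun i => P i (k + 1)) ≤ k ∧
      k ≤ #(univ.filter fun i => P i k) := by
    let Q (k : ℕ) := k ≤ #(univ.filter fun i => P i k)
    refine ⟨Nat.findGreatest Q (Fintype.card ι), ?_,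
      Nat.findGreatest_spec (P := Q) (Nat.zero_le _) (Nat.zero_le _)⟩
    rcases (Nat.findGreatest_le (P := Q) (Fintype.card ι)).lt_or_eq with hlt | heq
    · exact le_of_not_gt fun h => Nat.findGreatest_is_greatest (Nat.lt_succ_self _) hlt h
    · rw [heq]
      exact card_le_univ _
  have hAB : univ.filter (fun i => P i (k + 1)) ⊆ univ.filter fun i => P i k := by
    intro i hi
    have hk : 1 ≤ k := (card_pos.2 ⟨i, hi⟩).trans_le hA
    exact mem_filter.2 ⟨mem_univ i, hP i k hk (mem_filter.1 hi).2⟩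
  obtain ⟨S, hAS, hSB, rfl⟩ := exists_subsuperset_card_eq hAB hA hB
  exact ⟨S, fun i hi => (mem_filter.1 (hSB hi)).2,
    fun i hi h => hi (hAS (mem_filter.2 ⟨mem_univ i, h⟩))⟩

theorem strictMonoOn_Icc_of_lt_add_one {α : Type*} [Preorder α] {f : ℕ → α} {m n : ℕ}
    (hf : ∀ i, m ≤ i → i < n → f i < f (i + 1)) : StrictMonoOn f (Set.Icc m n) :=
  strictMonoOn_of_lt_succ Set.ordConnected_Icc fun i _ hi hi' => by
    rw [Order.succ_eq_add_one] at hi' ⊢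
    exact hf i hi.1 (by grind)

section Contract

variable {T : ℕ} {θ β : ℕ → ℝ} {B B_R M ε₁ : ℝ}

theorem gCoef_antitone {i : ℕ} (hβ : 0 ≤ β i) (hε : 0 ≤ ε₁) :
    Antitone (gCoef T θ β B B_R M ε₁ i) := fun μ μ' h => by
  have : (μ : ℝ) * β i * ε₁ ≤ μ' * β i * ε₁ := by gcongr
  unfold gCoef
  linarith

theorem iS_monotone (hβ : ∀ i ∈ Icc 1 T, 0 ≤ β i) (hε : 0 ≤ ε₁) :
    Monotone (iS T θ β B B_R M ε₁) := fun _ _ h => sup_mono fun i hi => by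
  rw [mem_filter] at hi ⊢
  exact ⟨hi.1, (gCoef_antitone (hβ i hi.1) hε h).trans hi.2⟩

theorem vval_self (μ : ℕ) : vval B B_R M μ M = (B - B_R) / μ * (M / M) := by
  rw [vval, div_mul_div_comm, div_mul_eq_mul_div]

theorem W_eq_ite (k μ : ℕ) :
    W T θ β B B_R M ε₁ k μ = if k ≤ iS T θ β B B_R M ε₁ μ then 0
      else (θ k - θ (iS T θ β B B_R M ε₁ μ + 1)) * vval B B_R M μ M := by
  set s := iS T θ β B B_R M ε₁ μ
  set c := vval B B_R M μ M
  have hv : ∀ j, vval B B_R M μ (qhat T θ β B B_R M ε₁ j μ) = if j ≤ s then 0 else c := by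
    intro j
    unfold qhat
    split_ifs <;> simp [vval, c]
  -- the prices telescope: only the step at `j = s + 1` is nonzero
  have hterm : ∀ j ∈ Icc 1 k, θ j * (vval B B_R M μ (qhat T θ β B B_R M ε₁ j μ) -
      vval B B_R M μ (qhat T θ β B B_R M ε₁ (j - 1) μ)) = if j = s + 1 then θ j * c else 0 := by
    intro j _
    rw [hv, hv]
    split_ifs <;> first | omega | ring
  rw [W, phat, sum_congr rfl hterm, sum_ite_eq', hv]
  simp only [mem_Icc]
  split_ifs <;> first | omega | ring

theorem W_antitoneOn (hθ : MonotoneOn θ (Set.Icc 1 T)) (hβ : ∀ i ∈ Icc 1 T, 0 ≤ β i)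
    (hε : 0 ≤ ε₁) (hBRB : B_R ≤ B) {t : ℕ} (ht : t ≤ T) :
    AntitoneOn (W T θ β B B_R M ε₁ t) (Set.Ici 1) := by
  intro μ hμ μ' _ hμμ'
  have hs := iS_monotone (θ := θ) (B := B) (B_R := B_R) (M := M) hβ hε hμμ'
  have hM : 0 ≤ M / M := by rcases eq_or_ne M 0 with h | h <;> simp [h]
  have hv_nonneg : 0 ≤ vval B B_R M μ' M := by rw [vval_self]; exact mul_nonneg (by positivity) hM
  have hv_anti : vval B B_R M μ' M ≤ vval B B_R M μ M := by
    rw [vval_self, vval_self]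
    have hμpos : (0 : ℝ) < μ := Nat.cast_pos.2 hμ
    exact mul_le_mul_of_nonneg_right
      (div_le_div_of_nonneg_left (by linarith) hμpos (by exact_mod_cast hμμ')) hM
  have hθle : ∀ a b, 1 ≤ a → a ≤ b → b ≤ T → θ a ≤ θ b :=
    fun a b ha hab hb => hθ ⟨ha, hab.trans hb⟩ ⟨ha.trans hab, hb⟩ hab
  rw [W_eq_ite, W_eq_ite]
  split_ifs
  · rfl
  · exact mul_nonneg (sub_nonneg.2 (hθle _ _ (by omega) (by omega) ht)) (hv_nonneg.trans hv_anti)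
  · omega
  · refine mul_le_mul ?_ hv_anti hv_nonneg (sub_nonneg.2 (hθle _ _ (by omega) (by omega) ht))
    exact sub_le_sub_left (hθle _ _ (by omega) (by omega) (by omega)) _

end Contract

theorem stmt5_general (T : ℕ) (θ β : ℕ → ℝ) (B B_R M ε₁ : ℝ)
    (hθmono : ∀ i, 1 ≤ i → i < T → θ i < θ (i + 1))
    (hθpos : ∀ i ∈ Finset.Icc 1 T, 0 < θ i)
    (hβ : ∀ i ∈ Finset.Icc 1 T, 0 ≤ β i)
    (hBR0 : 0 ≤ B_R) (hBRB : B_R ≤ B) (hε : 0 ≤ ε₁)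
    (N : ℕ) (τ : Fin N → ℕ) (hτ : ∀ i, τ i ∈ Finset.Icc 1 T)
    (r : ℝ) :
    ∃ a : Fin N → Bool,
      (∀ i : Fin N, a i = true →
        W T θ β B B_R M ε₁ (τ i) (N - (Finset.univ.filter fun j => a j = true).card + 1) ≤
          B_R * θ (τ i) / (((Finset.univ.filter fun j => a j = true).card : ℕ) : ℝ) - r) ∧
      (∀ i : Fin N, a i = false →
        B_R * θ (τ i) / ((((Finset.univ.filter fun j => a j = true).card : ℕ) : ℝ) + 1) - r ≤
          W T θ β B B_R M ε₁ (τ i) (N - (Finset.univ.filter fun j => a j = true).card)) := by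
  classical
  have hθ := (strictMonoOn_Icc_of_lt_add_one hθmono).monotoneOn
  obtain ⟨S, hreg, hunreg⟩ := exists_stable_finset
    (fun i k => W T θ β B B_R M ε₁ (τ i) (N - k + 1) ≤ B_R * θ (τ i) / k - r)
    fun i k hk h => by
      have hW : W T θ β B B_R M ε₁ (τ i) (N - k + 1) ≤
          W T θ β B B_R M ε₁ (τ i) (N - (k + 1) + 1) :=
        W_antitoneOn hθ hβ hε hBRB (mem_Icc.1 (hτ i)).2 (Set.mem_Ici.2 (by omega))
          (Set.mem_Ici.2 (by omega)) (by omega)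
      have hshare : B_R * θ (τ i) / ((k + 1 : ℕ) : ℝ) ≤ B_R * θ (τ i) / k := by
        refine div_le_div_of_nonneg_left (mul_nonneg hBR0 (hθpos _ (hτ i)).le)
          (Nat.cast_pos.2 hk) ?_
        push_cast
        linarith
      linarith
  have hcard : (univ.filter fun j => decide (j ∈ S) = true) = S := by ext; simp
  refine ⟨fun i => decide (i ∈ S), fun i hi => ?_, fun i hi => ?_⟩ <;> rw [hcard]
  · exact hreg i (by simpa using hi)
  · have hiS : i ∉ S := by simpa using hi
    have hlt : #S < N := by simpa using card_lt_univ_of_notMem hiS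
    have := hunreg i hiS
    rw [show N - (#S + 1) + 1 = N - #S by omega] at this
    push_cast at this
    linarith

/-- Under the incomplete-information contract construction, the database
registration game has a pure-strategy Nash equilibrium.  With `N` SUs of types
`τ : Fin N → {1, …, T}`, reserved bandwidth `0 ≤ B_R ≤ B` and registration fee `r > 0`,
a registered SU of type `t` obtains `B_R·θ_t/μ₀ − r` (with `μ₀` SUs registered) and an
unregistered SU of type `t` obtains `W_t(μ₁)` (with `μ₁ = N − μ₀` SUs unregistered).
There exists a profile `a : Fin N → Bool` (true = register) such that every registered SU
satisfies `B_R·θ_{τ(i)}/μ₀ − r ≥ W_{τ(i)}(μ₁ + 1)` and every unregistered SU satisfies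
`W_{τ(i)}(μ₁) ≥ B_R·θ_{τ(i)}/(μ₀ + 1) − r`. -/
theorem stmt5 (T : ℕ) (θ β : ℕ → ℝ) (B B_R M ε₁ : ℝ)
    (hθmono : ∀ i, 1 ≤ i → i < T → θ i < θ (i + 1))
    (hθpos : ∀ i ∈ Finset.Icc 1 T, 0 < θ i)
    (hβ : ∀ i ∈ Finset.Icc 1 T, 0 ≤ β i)
    (hBR0 : 0 ≤ B_R) (hBRB : B_R ≤ B) (hM : 0 < M) (hε : 0 ≤ ε₁)
    (N : ℕ) (τ : Fin N → ℕ) (hτ : ∀ i, τ i ∈ Finset.Icc 1 T)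
    (r : ℝ) (hr : 0 < r) :
    ∃ a : Fin N → Bool,
      (∀ i : Fin N, a i = true →
        W T θ β B B_R M ε₁ (τ i) (N - (Finset.univ.filter fun j => a j = true).card + 1) ≤
          B_R * θ (τ i) / (((Finset.univ.filter fun j => a j = true).card : ℕ) : ℝ) - r) ∧
      (∀ i : Fin N, a i = false →
        B_R * θ (τ i) / ((((Finset.univ.filter fun j => a j = true).card : ℕ) : ℝ) + 1) - r ≤
          W T θ β B B_R M ε₁ (τ i) (N - (Finset.univ.filter fun j => a j = true).card)) :=
  stmt5_general T θ β B B_R M ε₁ hθmono hθpos hβ hBR0 hBRB hε N τ hτ r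
end

section
/- Let θ_1 < θ_2 < … < θ_T be positive reals and c ≥ 0. Suppose q : {1, …, T} → ℝ satisfies 0 ≤ q_1 ≤ q_2 ≤ … ≤ q_T, and the prices p are defined by p_1 = θ_1·c·q_1 and p_k − p_{k−1} = θ_k·c·(q_k − q_{k−1}) for 2 ≤ k ≤ T. Then all incentive-compatibility constraints hold (for all i, j: θ_i·c·q_i − p_i ≥ θ_i·c·q_j − p_j), all individual-rationality constraints hold (for all i: θ_i·c·q_i − p_i ≥ 0), and the lowest type's individual-rationality constraint is binding (θ_1·c·q_1 − p_1 = 0). -/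
/-!
Since `p` charges each extra query of item `k` at the marginal rate `θ k * c`, moving a type-`t`
buyer from item `k` to item `k + 1` changes its utility by `(t - θ (k + 1)) * c * (q (k + 1) - q k)`.
With `θ` and `q` increasing, type `θ i` therefore gains by moving up towards item `i` and loses
by moving beyond it: its utility over the menu is unimodal with peak at `i`, which is incentive
compatibility. Individual rationality then follows by comparing with item `1`, which is priced
to leave type `θ 1` with zero surplus.
-/

section Screening

variable {θ q p : ℕ → ℝ} {c t : ℝ} {a b : ℕ}

lemma utility_add_one_sub_utility {k : ℕ}
    (hp : p (k + 1) - p k = θ (k + 1) * c * (q (k + 1) - q k)) :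
    (t * c * q (k + 1) - p (k + 1)) - (t * c * q k - p k) =
      (t - θ (k + 1)) * c * (q (k + 1) - q k) := by
  linear_combination (-1 : ℝ) * hp

lemma monotoneOn_utility (hc : 0 ≤ c) (hq : ∀ k, a ≤ k → k < b → q k ≤ q (k + 1))
    (hp : ∀ k, a ≤ k → k < b → p (k + 1) - p k = θ (k + 1) * c * (q (k + 1) - q k))
    (ht : ∀ k ∈ Set.Ioc a b, θ k ≤ t) :
    MonotoneOn (fun j ↦ t * c * q j - p j) (Set.Icc a b) := by
  refine monotoneOn_of_le_add_one Set.ordConnected_Icc fun k _ hk hk' ↦ ?_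
  have hka : a ≤ k := hk.1
  have hkb : k < b := hk'.2
  have hgain : 0 ≤ (t - θ (k + 1)) * c * (q (k + 1) - q k) :=
    mul_nonneg (mul_nonneg (sub_nonneg.2 (ht _ ⟨by omega, hkb⟩)) hc)
      (sub_nonneg.2 (hq k hka hkb))
  linarith [utility_add_one_sub_utility (t := t) (hp k hka hkb)]

lemma antitoneOn_utility (hc : 0 ≤ c) (hq : ∀ k, a ≤ k → k < b → q k ≤ q (k + 1))
    (hp : ∀ k, a ≤ k → k < b → p (k + 1) - p k = θ (k + 1) * c * (q (k + 1) - q k))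
    (ht : ∀ k ∈ Set.Ioc a b, t ≤ θ k) :
    AntitoneOn (fun j ↦ t * c * q j - p j) (Set.Icc a b) := by
  refine antitoneOn_of_add_one_le Set.ordConnected_Icc fun k _ hk hk' ↦ ?_
  have hka : a ≤ k := hk.1
  have hkb : k < b := hk'.2
  have hloss : (t - θ (k + 1)) * c * (q (k + 1) - q k) ≤ 0 :=
    mul_nonpos_of_nonpos_of_nonneg (mul_nonpos_of_nonpos_of_nonneg
      (sub_nonpos.2 (ht _ ⟨by omega, hkb⟩)) hc) (sub_nonneg.2 (hq k hka hkb))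
  linarith [utility_add_one_sub_utility (t := t) (hp k hka hkb)]

lemma utility_le_utility_self {T i j : ℕ} (hc : 0 ≤ c) (hθ : MonotoneOn θ (Set.Icc 1 T))
    (hq : ∀ k, 1 ≤ k → k < T → q k ≤ q (k + 1))
    (hp : ∀ k, 1 ≤ k → k < T → p (k + 1) - p k = θ (k + 1) * c * (q (k + 1) - q k))
    (hi : i ∈ Set.Icc 1 T) (hj : j ∈ Set.Icc 1 T) :
    θ i * c * q j - p j ≤ θ i * c * q i - p i := by
  obtain ⟨hi1, hiT⟩ := hi
  obtain ⟨hj1, hjT⟩ := hj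
  rcases le_total j i with hji | hij
  · refine monotoneOn_utility hc (fun k hk hki ↦ hq k hk (by omega))
      (fun k hk hki ↦ hp k hk (by omega)) (fun k ⟨hk1, hki⟩ ↦ ?_) ⟨hj1, hji⟩ ⟨hi1, le_rfl⟩ hji
    exact hθ ⟨by omega, by omega⟩ ⟨hi1, hiT⟩ hki
  · refine antitoneOn_utility hc (fun k hk hkT ↦ hq k (by omega) hkT)
      (fun k hk hkT ↦ hp k (by omega) hkT) (fun k ⟨hik, hkT⟩ ↦ ?_) ⟨le_rfl, hiT⟩ ⟨hij, hjT⟩ hij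
    exact hθ ⟨hi1, hiT⟩ ⟨by omega, hkT⟩ hik.le

end Screening

theorem stmt9_general (T : ℕ) (θ : ℕ → ℝ) (c : ℝ) (hc : 0 ≤ c)
    (hθmono : ∀ k, 1 ≤ k → k < T → θ k < θ (k + 1))
    (q p : ℕ → ℝ)
    (hq1 : 0 ≤ q 1)
    (hqmono : ∀ k, 2 ≤ k → k ≤ T → q (k - 1) ≤ q k)
    (hp1 : p 1 = θ 1 * c * q 1)
    (hprec : ∀ k, 2 ≤ k → k ≤ T → p k - p (k - 1) = θ k * c * (q k - q (k - 1))) :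
    (∀ i ∈ Finset.Icc 1 T, ∀ j ∈ Finset.Icc 1 T,
      θ i * c * q j - p j ≤ θ i * c * q i - p i) ∧
    (∀ i ∈ Finset.Icc 1 T, 0 ≤ θ i * c * q i - p i) ∧
    θ 1 * c * q 1 - p 1 = 0 := by
  have hθ : MonotoneOn θ (Set.Icc 1 T) :=
    monotoneOn_of_le_add_one Set.ordConnected_Icc fun k _ hk hk' ↦
      (hθmono k hk.1 (by have := hk'.2; omega)).le
  have hq : ∀ k, 1 ≤ k → k < T → q k ≤ q (k + 1) := fun k hk hkT ↦ by
    simpa using hqmono (k + 1) (by omega) hkT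
  have hp : ∀ k, 1 ≤ k → k < T → p (k + 1) - p k = θ (k + 1) * c * (q (k + 1) - q k) :=
    fun k hk hkT ↦ by simpa using hprec (k + 1) (by omega) hkT
  have hIC : ∀ i ∈ Finset.Icc 1 T, ∀ j ∈ Finset.Icc 1 T,
      θ i * c * q j - p j ≤ θ i * c * q i - p i := fun i hi j hj ↦
    utility_le_utility_self hc hθ hq hp (by simpa using hi) (by simpa using hj)
  refine ⟨hIC, fun i hi ↦ ?_, by rw [hp1, sub_self]⟩
  obtain ⟨hi1, hiT⟩ := Finset.mem_Icc.1 hi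
  have hθ1 : θ 1 ≤ θ i := hθ ⟨le_rfl, by omega⟩ ⟨hi1, hiT⟩ hi1
  have hrent : 0 ≤ (θ i - θ 1) * c * q 1 := by have := sub_nonneg.2 hθ1; positivity
  have := hIC i hi 1 (Finset.mem_Icc.2 ⟨le_rfl, by omega⟩)
  linarith

/-- Let `θ_1 < … < θ_T` be positive reals and `c ≥ 0`.  If the query
assignment satisfies `0 ≤ q_1 ≤ q_2 ≤ … ≤ q_T` and the prices are defined by
`p_1 = θ_1·c·q_1` and `p_k − p_{k−1} = θ_k·c·(q_k − q_{k−1})` for `2 ≤ k ≤ T`, then all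
incentive-compatibility constraints hold, all individual-rationality constraints hold,
and the lowest type's individual-rationality constraint is binding. -/
theorem stmt9 (T : ℕ) (hT : 1 ≤ T) (θ : ℕ → ℝ) (c : ℝ) (hc : 0 ≤ c)
    (hθmono : ∀ k, 1 ≤ k → k < T → θ k < θ (k + 1))
    (hθpos : ∀ k ∈ Finset.Icc 1 T, 0 < θ k)
    (q p : ℕ → ℝ)
    (hq1 : 0 ≤ q 1)
    (hqmono : ∀ k, 2 ≤ k → k ≤ T → q (k - 1) ≤ q k)
    (hp1 : p 1 = θ 1 * c * q 1)
    (hprec : ∀ k, 2 ≤ k → k ≤ T → p k - p (k - 1) = θ k * c * (q k - q (k - 1))) :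
    (∀ i ∈ Finset.Icc 1 T, ∀ j ∈ Finset.Icc 1 T,
      θ i * c * q j - p j ≤ θ i * c * q i - p i) ∧
    (∀ i ∈ Finset.Icc 1 T, 0 ≤ θ i * c * q i - p i) ∧
    θ 1 * c * q 1 - p 1 = 0 :=
  stmt9_general T θ c hc hθmono q p hq1 hqmono hp1 hprec
end
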